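/- arXiv:1711.10839 — 2 statements merged into one kernel-verified Lean document; each statement's English description precedes it below -/
import Mathlib

section
/- In the reduction from Set Covering to Template Embedding, if Z⊆W covers U and |Z|≤k, then placing an instance of A on node a_j for each set in Z, routing each source s_i's unit flow along one link (s_i, a_j) with the j-th set in Z containing the i-th element, and placing a single instance of B on node b receiving all flows from the A-instances, yields an embedding with zero capacity violations. -/
/-- CPU demand of component B in the reduction: `p_B(λ) = 1` if `λ ≤ k`,
and `2` otherwise. -/
def pB (k lam : ℕ) : ℕ := if lam ≤ k then 1 else 2

/-- A zero-violation embedding of the Template Embedding instance constructed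
from a Set Covering instance `(U, W, k)` with `U = Fin n` and the family `W`
indexed by `Fin m`. By the capacity structure of the reduction (nodes `s_i`
have zero capacities, `a_j` can only host `A`-instances, `b` can only host the
`B`-instance), such an embedding is described by: the set `Ahosts` of nodes
`a_j` hosting an instance of component `A`; a splittable routing `route i j`
of the unit flow of each source `s_i` along the links `(s_i, a_j)` (which
exist exactly when element `i` lies in set `W j`) to `A`-instances; each
`A`-instance outputs rate `r_A = 1` to the single `B`-instance on node `b`,
whose CPU demand `p_B(#A-instances)` must fit into `cap_cpu(b) = 1`; all link
capacities are `1`. -/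
structure ZeroViolationEmbedding (n m k : ℕ) (W : Fin m → Finset (Fin n)) where
  /-- the nodes `a_j` hosting an instance of component A -/
  Ahosts : Finset (Fin m)
  /-- `route i j` is the data rate of the flow from source `s_i` over the link `(s_i, a_j)` -/
  route : Fin n → Fin m → ℝ
  route_nonneg : ∀ i j, 0 ≤ route i j
  /-- each source's unit traffic is entirely consumed by instances of A -/
  route_total : ∀ i, (∑ j, route i j) = 1
  /-- flow can only use existing links `(s_i, a_j)` (element `i` in set `W j`)
  and only end in an `A`-instance -/
  route_support : ∀ i j, route i j ≠ 0 → i ∈ W j ∧ j ∈ Ahosts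
  /-- link capacities are 1 -/
  route_linkcap : ∀ i j, route i j ≤ 1
  /-- the `B`-instance on node `b` receives rate 1 from each `A`-instance and
  its CPU demand must fit `cap_cpu(b) = 1` -/
  cpu_b : pB k Ahosts.card ≤ 1

/-- (Forward direction of the reduction.) If `Z ⊆ W` covers
`U` and `|Z| ≤ k`, then placing an instance of A on node `a_j` for each set
in `Z`, routing each source `s_i`'s unit flow along one link `(s_i, a_{g i})`
where the set `W (g i) ∈ Z` contains element `i`, and placing the single
instance of B on node `b` receiving all the flows of the A-instances, yields
an embedding with zero capacity violations. -/
theorem cover_gives_embedding (n m k : ℕ) (W : Fin m → Finset (Fin n))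
    (Z : Finset (Fin m)) (hZcard : Z.card ≤ k)
    (g : Fin n → Fin m) (hg : ∀ i, g i ∈ Z ∧ i ∈ W (g i)) :
    ∃ E : ZeroViolationEmbedding n m k W,
      E.Ahosts = Z ∧ ∀ i j, E.route i j = if j = g i then 1 else 0 := by
  refine ⟨⟨Z, fun i j => if j = g i then 1 else 0, ?_, ?_, ?_, ?_, ?_⟩, rfl, fun i j => rfl⟩
  · intro i j; split <;> norm_num
  · intro i; simp
  · intro i j h
    split at h
    · next he => subst he; exact ⟨(hg i).2, (hg i).1⟩
    · simp at h
  · intro i j; split <;> norm_num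
  · simp [pB, hZcard]
end

section
/- In the reduction instance, every source node s_i can route its unit flow without link-capacity violation if and only if at least one neighbor a_j of s_i hosts an instance of A; hence zero-violation embeddings require the A-hosting nodes to dominate all source nodes in the bipartite incidence graph, which is exactly the covering condition. -/
/-- In the reduction instance, a source node `s_i` can route
its unit flow to A-instances without link-capacity violation (a nonnegative
splittable routing over the links `(s_i, a_j)`, each of capacity 1, totalling
1 and supported on links to A-hosting neighbors) if and only if at least one
neighbor `a_j` of `s_i` hosts an instance of A; hence in any zero-violation
embedding the A-hosting nodes dominate all source nodes in the bipartite
incidence graph — exactly the covering condition. -/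
theorem source_routing_iff_neighbor_hosts_A (n m k : ℕ)
    (W : Fin m → Finset (Fin n)) (Ahosts : Finset (Fin m)) (i : Fin n) :
    ((∃ route : Fin m → ℝ, (∀ j, 0 ≤ route j) ∧ (∑ j, route j) = 1 ∧
        (∀ j, route j ≠ 0 → i ∈ W j ∧ j ∈ Ahosts) ∧ (∀ j, route j ≤ 1)) ↔
      ∃ j ∈ Ahosts, i ∈ W j) ∧
    (∀ E : ZeroViolationEmbedding n m k W,
      ∀ i' : Fin n, ∃ j ∈ E.Ahosts, i' ∈ W j) := by
  constructor
  · constructor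
    · rintro ⟨route, hnn, htot, hsupp, hcap⟩
      have : ∃ j, route j ≠ 0 := by
        by_contra h
        push_neg at h
        simp [h] at htot
      obtain ⟨j, hj⟩ := this
      obtain ⟨h1, h2⟩ := hsupp j hj
      exact ⟨j, h2, h1⟩
    · rintro ⟨j, hjA, hjW⟩
      refine ⟨fun j' => if j' = j then 1 else 0, ?_, ?_, ?_, ?_⟩
      · intro j'; simp only []; split <;> norm_num
      · simp
      · intro j' hj'
        by_cases h : j' = j
        · subst h; exact ⟨hjW, hjA⟩
        · simp [h] at hj'
      · intro j'; simp only []; split <;> norm_num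
  · intro E i'
    have htot := E.route_total i'
    have : ∃ j, E.route i' j ≠ 0 := by
      by_contra h
      push_neg at h
      simp [h] at htot
    obtain ⟨j, hj⟩ := this
    obtain ⟨h1, h2⟩ := E.route_support i' j hj
    exact ⟨j, h2, h1⟩
end
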